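/- For the quotient A_n/(A_{p-1} × A_{n-p}), the Bruhat order on minimal coset representatives is isomorphic as a poset to the containment order on partitions fitting inside a p × (n+1-p) rectangle. -/

import Mathlib

open Equiv Finset

/-- The number of inversions of a permutation of `Fin m`; this is its Coxeter length
in the symmetric group `A_(m-1)`. -/
def invNum {m : ℕ} (w : Equiv.Perm (Fin m)) : ℕ :=
  ((Finset.univ : Finset (Fin m × Fin m)).filter
    (fun p => p.1 < p.2 ∧ w p.2 < w p.1)).card

/-- The strong Bruhat order on the symmetric group: the reflexive-transitive closure
of the relation "multiply by a reflection (a transposition) and increase the length". -/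
def bruhatLE {m : ℕ} (u v : Equiv.Perm (Fin m)) : Prop :=
  Relation.ReflTransGen
    (fun x y => invNum x < invNum y ∧ ∃ a b : Fin m, a ≠ b ∧ y = x * Equiv.swap a b)
    u v

/-! A Grassmannian permutation `w` (increasing on the positions `i < p` and on the positions
`i ≥ p`) is determined by its second block `b_k = w (p + k)`, and `λ_k = p + k - b_k` is a
partition in the `p × (n + 1 - p)` box; containment of partitions is the reverse pointwise order
of the second blocks.

A Bruhat step `x < x * (a b)`, `a < b`, moves the larger of the two values to the earlier
position, so the number of second-block positions holding a value `< j` never decreases along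
a Bruhat chain; for Grassmannian permutations these counts determine the second block. This
gives one direction. Conversely, let `t` be the first second-block position where the target
second block is smaller than `b`, and let `c = b_t`. Then `c - 1` sits in the first block, and
exchanging the positions of the adjacent values `c - 1` and `c` is a length-increasing
transposition that keeps the permutation Grassmannian and adds one box to `λ`. Descending in
this way reaches the target; starting from the identity it also shows that every partition in
the box occurs. -/

variable {m : ℕ}

theorem CovBy.swap_lt_swap {α : Type*} [LinearOrder α] {a b x y : α} (hab : a ⋖ b)
    (hxy : x < y) (hne : ¬(x = a ∧ y = b)) : swap a b x < swap a b y := by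
  have hlt := hab.lt
  have hcov := hab.2
  simp only [swap_apply_def]
  split_ifs <;> grind

theorem Fin.forall_le_val_iff {p : ℕ} {P : Fin m → Prop} :
    (∀ i : Fin m, p ≤ (i : ℕ) → P i) ↔ ∀ k : Fin (m - p), P ⟨p + k, by omega⟩ := by
  refine ⟨fun h k => h _ (Nat.le_add_right _ _), fun h i hi => ?_⟩
  simpa [Nat.add_sub_cancel' hi] using h ⟨i - p, by omega⟩

def inversions (w : Perm (Fin m)) : Finset (Fin m × Fin m) :=
  univ.filter fun q => q.1 < q.2 ∧ w q.2 < w q.1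

theorem mem_inversions {w : Perm (Fin m)} {q : Fin m × Fin m} :
    q ∈ inversions w ↔ q.1 < q.2 ∧ w q.2 < w q.1 := by
  simp [inversions]

theorem invNum_eq_card_inversions (w : Perm (Fin m)) : invNum w = #(inversions w) := rfl

theorem invNum_lt_mul_swap {x : Perm (Fin m)} {a b : Fin m} (hab : a < b) (hx : x a < x b) :
    invNum x < invNum (x * swap a b) := by
  set σ := swap a b
  -- `g` fixes the pairs whose order `σ` reverses: `(a, b)`, and `(a, c)`, `(c, b)` with
  -- `a < c < b`; these remain inversions of `x * σ` because `x a < x b`.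
  let g : Fin m × Fin m → Fin m × Fin m := fun q =>
    if σ q.1 < σ q.2 then (σ q.1, σ q.2) else q
  have hab_notMem : (a, b) ∉ inversions x := by simp [mem_inversions, hx.le]
  have hmaps : ∀ q ∈ insert (a, b) (inversions x), g q ∈ inversions (x * σ) := by
    rintro ⟨i, j⟩ hq
    simp only [mem_insert, Prod.mk.injEq, mem_inversions] at hq
    simp only [g, mem_inversions, Perm.mul_apply]
    split_ifs with hσ
    · simp only [σ, swap_apply_self]
      grind
    · grind
  have hinj : Set.InjOn g ↑(insert (a, b) (inversions x)) := by
    have hlt : ∀ q ∈ insert (a, b) (inversions x), q.1 < q.2 := by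
      simp only [mem_insert, mem_inversions]; rintro q (rfl | h) <;> simp_all
    rintro q hq q' hq' hg
    have h := hlt q hq; have h' := hlt q' hq'
    simp only [g] at hg
    split_ifs at hg with h1 h2 h2
    · simp only [Prod.mk.injEq, σ.injective.eq_iff] at hg; exact Prod.ext hg.1 hg.2
    · subst hg; simp only [σ, swap_apply_self] at h2; exact absurd h h2
    · subst hg; simp only [σ, swap_apply_self] at h1; exact absurd h' h1
    · exact hg
  rw [invNum_eq_card_inversions, invNum_eq_card_inversions]
  calc #(inversions x) < #(insert (a, b) (inversions x)) := by
        rw [card_insert_of_notMem hab_notMem]; exact Nat.lt_succ_self _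
    _ ≤ #(inversions (x * σ)) := card_le_card_of_injOn g hmaps hinj

theorem lt_of_invNum_lt_mul_swap {x : Perm (Fin m)} {a b : Fin m} (hab : a < b)
    (h : invNum x < invNum (x * swap a b)) : x a < x b := by
  by_contra! hba
  have hy : (x * swap a b) a < (x * swap a b) b := by
    simpa using lt_of_le_of_ne hba (x.injective.ne hab.ne')
  have := invNum_lt_mul_swap hab hy
  rw [mul_swap_mul_self] at this
  omega

def countBelow (p : ℕ) (w : Perm (Fin m)) (j : ℕ) : ℕ :=
  #(univ.filter fun i : Fin m => p ≤ (i : ℕ) ∧ (w i : ℕ) < j)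

theorem countBelow_le_mul_swap (p : ℕ) {x : Perm (Fin m)} {a b : Fin m} (hab : a < b)
    (hx : x a < x b) (j : ℕ) : countBelow p x j ≤ countBelow p (x * swap a b) j := by
  unfold countBelow
  by_cases ha : p ≤ (a : ℕ)
  · refine card_le_card_of_injOn (swap a b) (fun i hi => ?_) (swap a b).injective.injOn
    simp only [mem_coe, mem_filter, mem_univ, true_and] at hi ⊢
    rw [Perm.mul_apply, swap_apply_self]
    refine ⟨?_, hi.2⟩
    rw [swap_apply_def]
    split_ifs <;> grind
  · refine card_le_card fun i hi => ?_
    simp only [mem_filter, mem_univ, true_and] at hi ⊢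
    refine ⟨hi.1, ?_⟩
    rw [Perm.mul_apply, swap_apply_def]
    split_ifs <;> grind

theorem countBelow_mono_of_bruhatLE (p : ℕ) {u v : Perm (Fin m)} (h : bruhatLE u v) (j : ℕ) :
    countBelow p u j ≤ countBelow p v j := by
  induction h with
  | refl => rfl
  | tail _ hstep ih =>
    obtain ⟨hlen, a, b, hab, rfl⟩ := hstep
    rcases hab.lt_or_gt with hab | hba
    · exact ih.trans (countBelow_le_mul_swap p hab (lt_of_invNum_lt_mul_swap hab hlen) j)
    · rw [swap_comm] at hlen ⊢
      exact ih.trans (countBelow_le_mul_swap p hba (lt_of_invNum_lt_mul_swap hba hlen) j)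

def IsGrassmannian (p : ℕ) (w : Perm (Fin m)) : Prop :=
  (∀ i j : Fin m, i < j → (j : ℕ) < p → w i < w j) ∧
    (∀ i j : Fin m, p ≤ (i : ℕ) → i < j → w i < w j)

theorem isGrassmannian_one (p : ℕ) : IsGrassmannian p (1 : Perm (Fin m)) :=
  ⟨fun _ _ hij _ => hij, fun _ _ _ hij => hij⟩

namespace IsGrassmannian

variable {p : ℕ} {u v w : Perm (Fin m)}

theorem strictMonoOn_ge (hw : IsGrassmannian p w) : StrictMonoOn w {i | p ≤ (i : ℕ)} :=
  fun _ hi _ _ hij => hw.2 _ _ hi hij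

theorem lt_iff_sub_lt_countBelow (hw : IsGrassmannian p w) {i : Fin m} (hi : p ≤ (i : ℕ))
    (j : ℕ) : (w i : ℕ) < j ↔ (i : ℕ) - p < countBelow p w j := by
  have hp : p < m := hi.trans_lt i.isLt
  constructor
  · intro h
    calc (i : ℕ) - p < #(Icc (⟨p, hp⟩ : Fin m) i) := by rw [Fin.card_Icc]; simp only; omega
      _ ≤ countBelow p w j := card_le_card fun i' hi' => by
          simp only [mem_Icc, Fin.le_def, mem_filter, mem_univ, true_and] at hi' ⊢
          exact ⟨hi'.1, lt_of_le_of_lt (hw.strictMonoOn_ge.monotoneOn hi'.1 hi hi'.2) h⟩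
  · intro h
    by_contra! hji
    have : countBelow p w j ≤ #(Ico (⟨p, hp⟩ : Fin m) i) := card_le_card fun i' hi' => by
      simp only [mem_Ico, Fin.le_def, mem_filter, mem_univ, true_and] at hi' ⊢
      exact ⟨hi'.1, (hw.strictMonoOn_ge.lt_iff_lt hi'.1 hi).1 (by omega)⟩
    rw [Fin.card_Ico] at this
    simp only at this
    omega

theorem apply_le_of_bruhatLE (hu : IsGrassmannian p u) (hv : IsGrassmannian p v)
    (h : bruhatLE u v) {i : Fin m} (hi : p ≤ (i : ℕ)) : v i ≤ u i := by
  by_contra! hlt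
  have hcount := (hu.lt_iff_sub_lt_countBelow hi _).1 (Fin.lt_def.1 hlt)
  exact lt_irrefl _ ((hv.lt_iff_sub_lt_countBelow hi _).2
    (hcount.trans_le (countBelow_mono_of_bruhatLE p h _)))

theorem ext (hu : IsGrassmannian p u) (hv : IsGrassmannian p v)
    (h : ∀ i : Fin m, p ≤ (i : ℕ) → u i = v i) : u = v := by
  have hsymm : ∀ {x y : Perm (Fin m)}, (∀ i : Fin m, p ≤ (i : ℕ) → x i = y i) →
      ∀ c, p ≤ (x.symm c : ℕ) → y.symm c = x.symm c := fun {x y} hxy c hc =>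
    (Equiv.symm_apply_eq y).2 ((hxy _ hc).symm.trans (x.apply_symm_apply c)).symm
  have hrange : ∀ x : Perm (Fin m),
      Set.range (fun i : {i : Fin m // (i : ℕ) < p} => x i) = {c | (x.symm c : ℕ) < p} := by
    intro x; ext c
    exact ⟨by rintro ⟨i, rfl⟩; simpa using i.2, fun hc => ⟨⟨_, hc⟩, x.apply_symm_apply c⟩⟩
  have hfirst : (fun i : {i : Fin m // (i : ℕ) < p} => u i) =
      fun i : {i : Fin m // (i : ℕ) < p} => v i := by
    have hmono : ∀ x : Perm (Fin m), IsGrassmannian p x →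
        StrictMono fun i : {i : Fin m // (i : ℕ) < p} => x i :=
      fun x hx i j hij => hx.1 i j hij j.2
    rw [← (hmono u hu).range_inj (hmono v hv), hrange, hrange]
    ext c
    simp only [Set.mem_ofPred_eq, ← not_le, not_iff_not]
    exact ⟨fun hc => by rwa [hsymm h c hc],
      fun hc => by rwa [hsymm (fun i hi => (h i hi).symm) c hc]⟩
  ext i : 1
  by_cases hi : (i : ℕ) < p
  · exact congrFun hfirst ⟨i, hi⟩
  · exact h i (not_lt.1 hi)

theorem mul_swap (hu : IsGrassmannian p u) {a t : Fin m} (ha : (a : ℕ) < p) (ht : p ≤ (t : ℕ))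
    (hcov : u a ⋖ u t) : IsGrassmannian p (u * swap a t) := by
  rw [mul_swap_eq_swap_mul]
  refine ⟨fun i j hij hj => hcov.swap_lt_swap (hu.1 i j hij hj) ?_,
    fun i j hi hij => hcov.swap_lt_swap (hu.2 i j hi hij) ?_⟩
  · rintro ⟨-, h⟩
    rw [u.injective h] at hj
    omega
  · rintro ⟨h, -⟩
    rw [u.injective h] at hi
    omega

theorem exists_covBy (hu : IsGrassmannian p u) {β : Fin m → Fin m}
    (hβ : StrictMonoOn β {i | p ≤ (i : ℕ)}) {t : Fin m} (ht : p ≤ (t : ℕ)) (hlt : β t < u t)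
    (hmin : ∀ i : Fin m, p ≤ (i : ℕ) → i < t → β i = u i) :
    ∃ a : Fin m, (a : ℕ) < p ∧ β t ≤ u a ∧ u a ⋖ u t := by
  obtain ⟨c, hβc, hc⟩ := exists_le_covBy_of_lt hlt
  refine ⟨u.symm c, ?_, by simpa using hβc, by simpa using hc⟩
  by_contra! ha
  have hat : u.symm c < t := (hu.strictMonoOn_ge.lt_iff_lt ha ht).1 (by simpa using hc.lt)
  have hβa : β (u.symm c) = c := by simpa using hmin _ ha hat
  exact (hβ ha ht hat).not_ge (by rwa [hβa])

theorem exists_bruhatLE_eqOn (hu : IsGrassmannian p u) {β : Fin m → Fin m}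
    (hβ : StrictMonoOn β {i | p ≤ (i : ℕ)}) (hβu : ∀ i : Fin m, p ≤ (i : ℕ) → β i ≤ u i) :
    ∃ w, IsGrassmannian p w ∧ bruhatLE u w ∧ ∀ i : Fin m, p ≤ (i : ℕ) → w i = β i := by
  induction hN : ∑ i ∈ univ.filter (fun i : Fin m => p ≤ (i : ℕ)), (u i : ℕ)
    using Nat.strong_induction_on generalizing u with
  | _ N ih =>
  by_cases hdone : ∀ i : Fin m, p ≤ (i : ℕ) → u i = β i
  · exact ⟨u, hu, .refl, hdone⟩
  obtain ⟨t, ⟨ht, htβ⟩, hmin⟩ :=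
    wellFounded_lt.has_min {i : Fin m | p ≤ (i : ℕ) ∧ u i ≠ β i}
      (by simpa [Set.Nonempty] using hdone)
  obtain ⟨a, ha, hβa, hcov⟩ := hu.exists_covBy hβ ht (lt_of_le_of_ne (hβu t ht) htβ.symm)
    fun i hi hit => by_contra fun hne => hmin i ⟨hi, Ne.symm hne⟩ hit
  have hat : a < t := Fin.lt_def.2 (ha.trans_le ht)
  have hswap_t : (u * swap a t) t = u a := by simp
  have hswap_of_ne : ∀ i : Fin m, p ≤ (i : ℕ) → i ≠ t → (u * swap a t) i = u i :=
    fun i hi hit => by rw [Perm.mul_apply, swap_apply_of_ne_of_ne (by rintro rfl; omega) hit]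
  have hβu' : ∀ i : Fin m, p ≤ (i : ℕ) → β i ≤ (u * swap a t) i := fun i hi => by
    rcases eq_or_ne i t with rfl | hit
    · rwa [hswap_t]
    · rw [hswap_of_ne i hi hit]; exact hβu i hi
  have hsum :
      ∑ i ∈ univ.filter (fun i : Fin m => p ≤ (i : ℕ)), ((u * swap a t) i : ℕ) < N := by
    rw [← hN]
    refine sum_lt_sum (fun i hi => ?_) ⟨t, by simpa using ht, ?_⟩
    · rcases eq_or_ne i t with rfl | hit
      · rw [hswap_t]; exact hcov.lt.le
      · rw [hswap_of_ne i (by simpa using hi) hit]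
    · rw [hswap_t]; exact hcov.lt
  obtain ⟨w, hw, huw, hwβ⟩ := ih _ hsum (hu.mul_swap ha ht hcov) hβu' rfl
  exact ⟨w, hw, .head ⟨invNum_lt_mul_swap hat hcov.lt, a, t, hat.ne, rfl⟩ huw, hwβ⟩

theorem bruhatLE_iff (hu : IsGrassmannian p u) (hv : IsGrassmannian p v) :
    bruhatLE u v ↔ ∀ i : Fin m, p ≤ (i : ℕ) → v i ≤ u i := by
  refine ⟨fun h i hi => hu.apply_le_of_bruhatLE hv h hi, fun h => ?_⟩
  obtain ⟨w, hw, huw, hwv⟩ := hu.exists_bruhatLE_eqOn hv.strictMonoOn_ge h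
  rwa [hw.ext hv hwv] at huw

theorem apply_add_sub_le (hw : IsGrassmannian p w) {i j : Fin m} (hi : p ≤ (i : ℕ))
    (hij : i ≤ j) : (w i : ℕ) + (j - i) ≤ w j := by
  have hmaps : Set.MapsTo w (Icc i j) (Icc (w i) (w j)) := fun x hx => by
    simp only [coe_Icc, Set.mem_Icc] at hx ⊢
    have hx' : p ≤ (x : ℕ) := hi.trans hx.1
    exact ⟨hw.strictMonoOn_ge.monotoneOn hi hx' hx.1,
      hw.strictMonoOn_ge.monotoneOn hx' (hi.trans hij) hx.2⟩
  have := card_le_card_of_injOn w hmaps w.injective.injOn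
  simp only [Fin.card_Icc] at this
  omega

theorem sub_le_apply (hw : IsGrassmannian p w) {i : Fin m} (hi : p ≤ (i : ℕ)) :
    (i : ℕ) - p ≤ w i := by
  have := hw.apply_add_sub_le (i := ⟨p, by omega⟩) le_rfl (Fin.le_def.2 hi)
  simp only at this
  omega

theorem apply_le (hw : IsGrassmannian p w) {i : Fin m} (hi : p ≤ (i : ℕ)) : (w i : ℕ) ≤ i := by
  have := hw.apply_add_sub_le (j := ⟨m - 1, by omega⟩) hi (Fin.le_def.2 (by simp; omega))
  have := (w ⟨m - 1, by omega⟩).isLt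
  simp only at *
  omega

def toPartition (hw : IsGrassmannian p w) : {f : Fin (m - p) → Fin (p + 1) // Antitone f} :=
  ⟨fun k => ⟨p + k - w ⟨p + k, by omega⟩, by
      have := hw.sub_le_apply (i := ⟨p + k, by omega⟩) (Nat.le_add_right _ _)
      simp only at this
      omega⟩,
    fun k l hkl => by
      have := hw.apply_add_sub_le (i := ⟨p + k, by omega⟩) (j := ⟨p + l, by omega⟩)
        (Nat.le_add_right _ _) (Fin.le_def.2 (by simpa using hkl))
      simp only [Fin.le_def] at this ⊢
      omega⟩

theorem toPartition_le_iff (hu : IsGrassmannian p u) (hv : IsGrassmannian p v)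
    (k : Fin (m - p)) :
    hu.toPartition.1 k ≤ hv.toPartition.1 k ↔ v ⟨p + k, by omega⟩ ≤ u ⟨p + k, by omega⟩ := by
  have hu' := hu.apply_le (i := ⟨p + k, by omega⟩) (Nat.le_add_right _ _)
  have hv' := hv.apply_le (i := ⟨p + k, by omega⟩) (Nat.le_add_right _ _)
  simp only [toPartition, Fin.le_def] at hu' hv' ⊢
  omega

theorem toPartition_bijective :
    Function.Bijective fun w : {w : Perm (Fin m) // IsGrassmannian p w} => w.2.toPartition := by
  refine ⟨fun u v huv => Subtype.ext (u.2.ext v.2 (Fin.forall_le_val_iff.2 fun k => ?_)), ?_⟩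
  · have hk : u.2.toPartition.1 k = v.2.toPartition.1 k := congrArg (fun f => f.1 k) huv
    exact le_antisymm ((v.2.toPartition_le_iff u.2 k).1 hk.ge)
      ((u.2.toPartition_le_iff v.2 k).1 hk.le)
  · rintro ⟨f, hf⟩
    let β : Fin m → Fin m := fun i =>
      if hi : p ≤ (i : ℕ) then ⟨i - f ⟨i - p, by omega⟩, by omega⟩ else i
    have hβ : StrictMonoOn β {i | p ≤ (i : ℕ)} := by
      intro i (hi : p ≤ (i : ℕ)) j (hj : p ≤ (j : ℕ)) hij
      have hfij : f ⟨j - p, by omega⟩ ≤ f ⟨i - p, by omega⟩ :=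
        hf (Fin.le_def.2 (Nat.sub_le_sub_right (Fin.le_def.1 hij.le) p))
      have := (f ⟨i - p, by omega⟩).isLt
      simp only [β, dif_pos hi, dif_pos hj, Fin.lt_def, Fin.le_def] at hfij hij ⊢
      omega
    obtain ⟨w, hw, -, hwβ⟩ := (isGrassmannian_one p).exists_bruhatLE_eqOn hβ fun i hi => by
      simp only [β, dif_pos hi, Fin.le_def, Perm.one_apply]
      omega
    refine ⟨⟨w, hw⟩, Subtype.ext (funext fun k => Fin.ext ?_)⟩
    have := (f k).isLt
    simp only [toPartition, hwβ ⟨p + k, by omega⟩ (Nat.le_add_right p k), β, Nat.le_add_right,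
      dif_pos, Nat.add_sub_cancel_left, Fin.eta]
    omega

end IsGrassmannian

theorem bruhat_iso_young_general (n p : ℕ) :
    ∃ e : {w : Equiv.Perm (Fin (n + 1)) //
            (∀ i j : Fin (n + 1), i < j → (j : ℕ) < p → w i < w j) ∧
            (∀ i j : Fin (n + 1), p ≤ (i : ℕ) → i < j → w i < w j)} ≃
          {f : Fin (n + 1 - p) → Fin (p + 1) // Antitone f},
      ∀ u v, bruhatLE u.1 v.1 ↔ ∀ i, (e u).1 i ≤ (e v).1 i := by
  refine ⟨Equiv.ofBijective _ IsGrassmannian.toPartition_bijective, fun u v => ?_⟩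
  rw [IsGrassmannian.bruhatLE_iff u.2 v.2, Fin.forall_le_val_iff]
  exact forall_congr' fun k => (IsGrassmannian.toPartition_le_iff u.2 v.2 k).symm

/-- For the quotient `A_n/(A_(p-1) × A_(n-p))`, the Bruhat order on the minimal
coset representatives (the permutations of `[n+1]` increasing on positions `1..p`
and on positions `p+1..n+1`) is isomorphic, as a poset, to the containment order on
partitions fitting inside a `p × (n+1-p)` rectangle (recorded as antitone vectors of
part sizes, ordered componentwise). -/
theorem bruhat_iso_young (n p : ℕ) (hp : 1 ≤ p) (hpn : p ≤ n) :
    ∃ e : {w : Equiv.Perm (Fin (n + 1)) //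
            (∀ i j : Fin (n + 1), i < j → (j : ℕ) < p → w i < w j) ∧
            (∀ i j : Fin (n + 1), p ≤ (i : ℕ) → i < j → w i < w j)} ≃
          {f : Fin (n + 1 - p) → Fin (p + 1) // Antitone f},
      ∀ u v, bruhatLE u.1 v.1 ↔ ∀ i, (e u).1 i ≤ (e v).1 i :=
  bruhat_iso_young_general n p
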